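/- arXiv:2004.04939 — 2 statements merged into one kernel-verified Lean document; each statement's English description precedes it below -/
import Mathlib

section
/- There exists a group homomorphism from the braid group B(A) to the group of F-algebra automorphisms of K_t(A) that sends the generator σ_i to T_i for every i ∈ I. In other words, the braid group B(A) acts on K_t(A) by F-algebra automorphisms via the explicit formulas: σ_i(y(j,m)) = y(j, m + δ_{ij}) if a(i,j) ≠ −1 and σ_i(y(j,m)) = (t^{1/2} y(j,m) y(i,m) − t^{−1/2} y(i,m) y(j,m)) / (t − t^{−1}) if a(i,j) = −1. -/
/-!
Every relation of `B(A)` is an identity between automorphisms of `K_t(A)`, so it can be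
checked on the generators `y(k,m)`. Everything reduces to two facts about the q-bracket
`[u, v] = (t^{1/2} u v − t^{−1/2} v u) / (t − t^{−1})`, in terms of which
`T_i(y(j,m)) = [y(j,m), y(i,m)]` when `a(i,j) = −1`:
* the t-boson relations between the levels `m` and `m + 1` give the inversion formula
  `T_i [y(i,m), y(j,m)] = y(j,m)`, which settles the braid relation on `y(i,m)` and `y(j,m)`;
* `[[u, v], w] = [u, [v, w]]` when `u, w` commute and `[[u, v], w] = [[u, w], v]` when `v, w`
  commute, which settle the remaining generators, since positive definiteness of `A` forbids
  a vertex adjacent to both `i` and `j` when `a(i,j) = −1`.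
-/

noncomputable section

/-- The base field `F = ℂ(s)`, rational functions over `ℂ` in one variable `s`. -/
abbrev F : Type := RatFunc ℂ

/-- `t^{1/2} := s`. -/
def tHalf : F := RatFunc.X

/-- `t := s^2`. -/
def tq : F := RatFunc.X ^ 2

/-- `A = (a i j)` is the Cartan matrix of a finite-dimensional simply-laced simple Lie
algebra of type ADE: a symmetric positive-definite integer matrix with diagonal entries `2`
and off-diagonal entries in `{0, -1}`. -/
def IsCartanADE {I : Type} [Fintype I] (a : I → I → ℤ) : Prop :=
  (∀ i, a i i = 2) ∧ (∀ i j, a i j = a j i) ∧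
    (∀ i j, i ≠ j → a i j = 0 ∨ a i j = -1) ∧
    Matrix.PosDef (Matrix.of fun i j : I => (a i j : ℝ))

variable {I : Type} [Fintype I] [DecidableEq I]

/-- The generator `y(i,m)` of the free algebra. -/
def X (i : I) (m : ℤ) : FreeAlgebra F (I × ℤ) := FreeAlgebra.ι F (i, m)

/-- The defining relations (a), (b), (c) of the quantum Grothendieck ring `K_t(A)`:
(a) quantum Serre relations in each copy, (b) `t`-boson relations between adjacent
copies, (c) `t`-commutation relations between non-adjacent copies. -/
inductive KtRel (a : I → I → ℤ) :
    FreeAlgebra F (I × ℤ) → FreeAlgebra F (I × ℤ) → Prop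
  | comm0 {i j : I} {m : ℤ} (h : a i j = 0) :
      KtRel a (X i m * X j m) (X j m * X i m)
  | serre {i j : I} {m : ℤ} (h : a i j = -1) :
      KtRel a (X i m ^ 2 * X j m + X j m * X i m ^ 2)
        ((tq + tq⁻¹) • (X i m * X j m * X i m))
  | boson (i j : I) (m : ℤ) :
      KtRel a (X i m * X j (m + 1))
        ((tq ^ (a i j)) • (X j (m + 1) * X i m)
          + (if i = j then ((1 : F) - tq ^ 2) • (1 : FreeAlgebra F (I × ℤ)) else 0))
  | tcomm {i j : I} {m p : ℤ} (h : p > m + 1) :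
      KtRel a (X i m * X j p)
        ((tq ^ ((((-1 : ℤˣ) ^ (p - m + 1) : ℤˣ) : ℤ) * a i j)) • (X j p * X i m))

/-- The quantum Grothendieck ring `K_t(A)`. -/
abbrev Kt (a : I → I → ℤ) := RingQuot (KtRel a)

/-- The generators `y(i,m)` of `K_t(A)`. -/
def y (a : I → I → ℤ) (i : I) (m : ℤ) : Kt a :=
  RingQuot.mkAlgHom F (KtRel a) (X i m)

/-- `z(i; j, m) := (t^{1/2} y(j,m) y(i,m) − t^{−1/2} y(i,m) y(j,m)) / (t − t^{−1})`. -/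
def z (a : I → I → ℤ) (i j : I) (m : ℤ) : Kt a :=
  (tq - tq⁻¹)⁻¹ • (tHalf • (y a j m * y a i m) - tHalf⁻¹ • (y a i m * y a j m))

/-- `T` satisfies the defining formulas of the braid-group generator `T_i` on `K_t(A)`:
`T(y(j,m)) = y(j, m + δ_{ij})` if `a i j ≠ -1`, and
`T(y(j,m)) = (t^{1/2} y(j,m) y(i,m) − t^{−1/2} y(i,m) y(j,m)) / (t − t^{−1})`
if `a i j = -1`. -/
def TiFormula (a : I → I → ℤ) (i : I) (T : Kt a → Kt a) : Prop :=
  ∀ (j : I) (m : ℤ),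
    T (y a j m) =
      if a i j = -1 then z a i j m else y a j (m + if i = j then 1 else 0)

/-- `T` satisfies the defining formulas of the inverse braid-group generator `T_i'`:
`T(y(j,m)) = y(j, m − δ_{ij})` if `a i j ≠ -1`, and
`T(y(j,m)) = (t^{1/2} y(i,m) y(j,m) − t^{−1/2} y(j,m) y(i,m)) / (t − t^{−1})`
if `a i j = -1`. -/
def TiInvFormula (a : I → I → ℤ) (i : I) (T : Kt a → Kt a) : Prop :=
  ∀ (j : I) (m : ℤ),
    T (y a j m) =
      if a i j = -1 then
        (tq - tq⁻¹)⁻¹ • (tHalf • (y a i m * y a j m) - tHalf⁻¹ • (y a j m * y a i m))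
      else y a j (m - if i = j then 1 else 0)

/-- The braid relations of the braid group `B(A)`: `σ_i σ_j σ_i = σ_j σ_i σ_j` whenever
`a i j = -1`, and `σ_i σ_j = σ_j σ_i` whenever `a i j = 0` with `i ≠ j`. -/
def braidRels {I : Type} (a : I → I → ℤ) : Set (FreeGroup I) :=
  {r | (∃ i j : I, a i j = -1 ∧
          r = FreeGroup.of i * FreeGroup.of j * FreeGroup.of i *
              (FreeGroup.of j * FreeGroup.of i * FreeGroup.of j)⁻¹) ∨
       (∃ i j : I, i ≠ j ∧ a i j = 0 ∧
          r = FreeGroup.of i * FreeGroup.of j * (FreeGroup.of j * FreeGroup.of i)⁻¹)}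

section QBracket

variable {K R : Type*} [Field K] [Ring R] [Algebra K R]

def qBracket (t s : K) (u v : R) : R :=
  (t - t⁻¹)⁻¹ • (s • (u * v) - s⁻¹ • (v * u))

lemma map_qBracket {S G : Type*} [Ring S] [Algebra K S] [FunLike G R S] [AlgHomClass G K R S]
    (f : G) (t s : K) (u v : R) : f (qBracket t s u v) = qBracket t s (f u) (f v) := by
  simp only [qBracket, map_smul, map_sub, map_mul]

lemma qBracket_assoc_of_commute (t s : K) {u v w : R} (h : Commute u w) :
    qBracket t s (qBracket t s u v) w = qBracket t s u (qBracket t s v w) := by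
  have huvw : u * v * w = u * (v * w) := mul_assoc ..
  have hvuw : v * u * w = v * w * u := by rw [mul_assoc, h.eq, ← mul_assoc]
  have hwuv : w * (u * v) = u * (w * v) := by rw [← mul_assoc, ← h.eq, mul_assoc]
  have hwvu : w * (v * u) = w * v * u := (mul_assoc ..).symm
  simp only [qBracket, smul_sub, mul_sub, sub_mul, mul_smul_comm, smul_mul_assoc, smul_smul]
  rw [huvw, hvuw, hwuv, hwvu]
  module

lemma qBracket_right_comm_of_commute (t s : K) {u v w : R} (h : Commute v w) :
    qBracket t s (qBracket t s u v) w = qBracket t s (qBracket t s u w) v := by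
  have huvw : u * v * w = u * w * v := by rw [mul_assoc, h.eq, ← mul_assoc]
  have hvuw : v * u * w = v * (u * w) := mul_assoc ..
  have hwuv : w * (u * v) = w * u * v := (mul_assoc ..).symm
  have hwvu : w * (v * u) = v * (w * u) := by rw [← mul_assoc, ← h.eq, mul_assoc]
  simp only [qBracket, smul_sub, mul_sub, sub_mul, mul_smul_comm, smul_mul_assoc, smul_smul]
  rw [huvw, hvuw, hwuv, hwvu]
  module

lemma qBracket_qBracket_eq_of_boson {t s : K} (hst : s ^ 2 = t) (ht : t - t⁻¹ ≠ 0)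
    {x u v : R} (hvx : v * x = t ^ 2 • (x * v) + (1 - t ^ 2) • 1)
    (hux : u * x = t⁻¹ • (x * u)) :
    qBracket t s x (qBracket t s u v) = u := by
  have ht0 : t ≠ 0 := by rintro rfl; simp at ht
  have hs : s ≠ 0 := by rintro rfl; subst hst; simp at ht0
  have huvx : u * v * x = t • (x * (u * v)) + (1 - t ^ 2) • u := by
    rw [mul_assoc, hvx, mul_add, mul_smul_comm, mul_smul_comm, mul_one, ← mul_assoc, hux,
      smul_mul_assoc, smul_smul, mul_assoc]
    congr 2
    field_simp
  have hvux : v * u * x = t • (x * (v * u)) + (t⁻¹ - t) • u := by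
    rw [mul_assoc, hux, mul_smul_comm, ← mul_assoc, hvx, add_mul, smul_add, smul_mul_assoc,
      smul_mul_assoc, one_mul, smul_smul, smul_smul, mul_assoc]
    congr 2 <;> field_simp
  simp only [qBracket, smul_sub, mul_sub, sub_mul, mul_smul_comm, smul_mul_assoc, smul_smul]
  rw [huvx, hvux]
  subst hst
  have h4 : s ^ 4 - 1 ≠ 0 := by
    contrapose! ht
    field_simp
    linear_combination ht
  match_scalars <;> field_simp <;> ring

end QBracket

lemma tq_sub_inv_ne_zero : tq - tq⁻¹ ≠ 0 := by
  have hX : (RatFunc.X : F) ≠ 0 := RatFunc.X_ne_zero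
  have hdeg : tq.intDegree = 2 := by
    rw [tq, pow_two, RatFunc.intDegree_mul hX hX, RatFunc.intDegree_X]
    rfl
  intro h
  have := congrArg RatFunc.intDegree (sub_eq_zero.mp h)
  rw [RatFunc.intDegree_inv, hdeg] at this
  omega

section Relations

omit [Fintype I]

variable {a : I → I → ℤ}

lemma z_eq_qBracket (i j : I) (m : ℤ) : z a i j m = qBracket tq tHalf (y a j m) (y a i m) :=
  rfl

lemma commute_y_of_eq_zero {i j : I} (h : a i j = 0) (m : ℤ) : Commute (y a i m) (y a j m) := by
  have hrel := RingQuot.mkAlgHom_rel F (KtRel.comm0 (a := a) (m := m) h)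
  rw [map_mul, map_mul] at hrel
  exact hrel

lemma y_mul_y_succ_self {i : I} (h : a i i = 2) (m : ℤ) :
    y a i m * y a i (m + 1) = tq ^ 2 • (y a i (m + 1) * y a i m) + (1 - tq ^ 2) • 1 := by
  have hrel := RingQuot.mkAlgHom_rel F (KtRel.boson (a := a) i i m)
  simp only [h, if_pos, map_add, map_mul, map_smul, map_one, zpow_ofNat] at hrel
  exact hrel

lemma y_mul_y_succ_of_eq_neg_one {i j : I} (h : a i j = -1) (hne : i ≠ j) (m : ℤ) :
    y a i m * y a j (m + 1) = tq⁻¹ • (y a j (m + 1) * y a i m) := by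
  have hrel := RingQuot.mkAlgHom_rel F (KtRel.boson (a := a) i j m)
  simp only [h, if_neg hne, add_zero, map_mul, map_smul, zpow_neg, zpow_one] at hrel
  exact hrel

lemma Kt.algHom_ext {A : Type*} [Semiring A] [Algebra F A] {f g : Kt a →ₐ[F] A}
    (h : ∀ i m, f (y a i m) = g (y a i m)) : f = g :=
  RingQuot.ringQuot_ext' (S := F) f g (FreeAlgebra.hom_ext (funext fun ⟨i, m⟩ => h i m))

lemma Kt.algEquiv_ext {σ τ : Kt a ≃ₐ[F] Kt a} (h : ∀ i m, σ (y a i m) = τ (y a i m)) :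
    σ = τ :=
  AlgEquiv.coe_toAlgHom_injective (Kt.algHom_ext h)

end Relations

section TiFormula

omit [Fintype I]

variable {a : I → I → ℤ} {i j k : I}

lemma TiFormula.apply_self {T : Kt a → Kt a} (hT : TiFormula a i T) (hii : a i i = 2) (m : ℤ) :
    T (y a i m) = y a i (m + 1) := by
  simpa [hii] using hT i m

lemma TiFormula.apply_of_ne {T : Kt a → Kt a} (hT : TiFormula a i T) (hij : a i j ≠ -1)
    (hne : i ≠ j) (m : ℤ) : T (y a j m) = y a j m := by
  simpa [hij, hne] using hT j m

lemma TiFormula.apply_of_eq_neg_one {T : Kt a → Kt a} (hT : TiFormula a i T) (hij : a i j = -1)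
    (m : ℤ) : T (y a j m) = qBracket tq tHalf (y a j m) (y a i m) :=
  (hT j m).trans ((if_pos hij).trans (z_eq_qBracket i j m))

lemma TiFormula.apply_eq_or {T : Kt a → Kt a} (hT : TiFormula a i T)
    (hik : a i k = 0 ∨ a i k = -1) (hne : i ≠ k) (m : ℤ) :
    T (y a k m) = y a k m ∨ T (y a k m) = qBracket tq tHalf (y a k m) (y a i m) :=
  hik.imp (fun h => hT.apply_of_ne (by simp [h]) hne m) (fun h => hT.apply_of_eq_neg_one h m)

lemma TiFormula.apply_qBracket {σ : Kt a ≃ₐ[F] Kt a} (hσ : TiFormula a i σ) (hii : a i i = 2)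
    (hij : a i j = -1) (hji : a j i = -1) (m : ℤ) :
    σ (qBracket tq tHalf (y a i m) (y a j m)) = y a j m := by
  have hne : j ≠ i := by rintro rfl; omega
  rw [map_qBracket, hσ.apply_self hii, hσ.apply_of_eq_neg_one hij]
  exact qBracket_qBracket_eq_of_boson rfl tq_sub_inv_ne_zero (y_mul_y_succ_self hii m)
    (y_mul_y_succ_of_eq_neg_one hji hne m)

variable {σ τ : Kt a ≃ₐ[F] Kt a}

lemma braid_apply_y_self (hσ : TiFormula a i σ) (hτ : TiFormula a j τ) (hii : a i i = 2)
    (hjj : a j j = 2) (hij : a i j = -1) (hji : a j i = -1) (m : ℤ) :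
    σ (τ (σ (y a i m))) = τ (σ (τ (y a i m))) := by
  rw [hσ.apply_self hii, hτ.apply_of_eq_neg_one hji, hσ.apply_qBracket hii hij hji,
    hτ.apply_of_eq_neg_one hji, hσ.apply_qBracket hii hij hji, hτ.apply_self hjj]

lemma braid_apply_y_of_eq_zero (hσ : TiFormula a i σ) (hτ : TiFormula a j τ) (hjj : a j j = 2)
    (hij : a i j = -1) (hji : a j i = -1) (hik : a i k = 0) (hki : a k i = 0)
    (hjk : a j k = 0 ∨ a j k = -1) (hne_ik : i ≠ k) (hne_jk : j ≠ k) (m : ℤ) :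
    σ (τ (σ (y a k m))) = τ (σ (τ (y a k m))) := by
  have hσk : σ (y a k m) = y a k m := hσ.apply_of_ne (by simp [hik]) hne_ik m
  rcases hτ.apply_eq_or hjk hne_jk m with hτk | hτk
  · simp only [hσk, hτk]
  · simp only [hσk, hτk, map_qBracket, hσ.apply_of_eq_neg_one hij, hτ.apply_qBracket hjj hji hij]
    exact (qBracket_assoc_of_commute _ _ (commute_y_of_eq_zero hki m)).symm

end TiFormula

section Cartan

variable {a : I → I → ℤ} {i j : I} {σ τ : Kt a ≃ₐ[F] Kt a}

lemma IsCartanADE.not_triangle (hA : IsCartanADE a) {k : I}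
    (hij : a i j = -1) (hik : a i k = -1) (hjk : a j k = -1) : False := by
  obtain ⟨hdiag, hsymm, -, hpos⟩ := hA
  have hij' : i ≠ j := by rintro rfl; simp_all
  have hik' : i ≠ k := by rintro rfl; simp_all
  have hjk' : j ≠ k := by rintro rfl; simp_all
  -- the quadratic form vanishes on `e_i + e_j + e_k`
  set v : I → ℝ := Pi.single i 1 + Pi.single j 1 + Pi.single k 1
  have hv : v ≠ 0 := fun h => by simpa [v, hij', hik'] using congrFun h i
  have hpos_v := hpos.dotProduct_mulVec_pos hv
  norm_num [v, Matrix.mulVec_add, add_dotProduct, dotProduct_add, Matrix.mulVec_single,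
    hdiag, hsymm j i, hsymm k i, hsymm k j, hij, hik, hjk] at hpos_v

lemma IsCartanADE.braid_apply_y (hA : IsCartanADE a) (hij : a i j = -1) (hσ : TiFormula a i σ)
    (hτ : TiFormula a j τ) (k : I) (m : ℤ) :
    σ (τ (σ (y a k m))) = τ (σ (τ (y a k m))) := by
  have ⟨hdiag, hsymm, hoff, _⟩ := hA
  have hji : a j i = -1 := (hsymm j i).trans hij
  by_cases hki : k = i
  · subst hki
    exact braid_apply_y_self hσ hτ (hdiag k) (hdiag j) hij hji m
  by_cases hkj : k = j
  · subst hkj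
    exact (braid_apply_y_self hτ hσ (hdiag k) (hdiag i) hji hij m).symm
  rcases hoff i k (Ne.symm hki) with hik | hik
  · exact braid_apply_y_of_eq_zero hσ hτ (hdiag j) hij hji hik ((hsymm k i).trans hik)
      (hoff j k (Ne.symm hkj)) (Ne.symm hki) (Ne.symm hkj) m
  rcases hoff j k (Ne.symm hkj) with hjk | hjk
  · exact (braid_apply_y_of_eq_zero hτ hσ (hdiag i) hji hij hjk ((hsymm k j).trans hjk)
      (Or.inr hik) (Ne.symm hkj) (Ne.symm hki) m).symm
  · exact (hA.not_triangle hij hik hjk).elim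

lemma IsCartanADE.commute_apply_y (hA : IsCartanADE a) (hne : i ≠ j) (hij : a i j = 0)
    (hσ : TiFormula a i σ) (hτ : TiFormula a j τ) (k : I) (m : ℤ) :
    σ (τ (y a k m)) = τ (σ (y a k m)) := by
  obtain ⟨hdiag, hsymm, hoff, -⟩ := hA
  have hji : a j i = 0 := (hsymm j i).trans hij
  have hσj : ∀ n, σ (y a j n) = y a j n := hσ.apply_of_ne (by simp [hij]) hne
  have hτi : ∀ n, τ (y a i n) = y a i n := hτ.apply_of_ne (by simp [hji]) (Ne.symm hne)
  by_cases hki : k = i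
  · subst hki
    rw [hτi, hσ.apply_self (hdiag k), hτi]
  by_cases hkj : k = j
  · subst hkj
    rw [hσj, hτ.apply_self (hdiag k), hσj]
  rcases hσ.apply_eq_or (hoff i k (Ne.symm hki)) (Ne.symm hki) m with hσk | hσk <;>
    rcases hτ.apply_eq_or (hoff j k (Ne.symm hkj)) (Ne.symm hkj) m with hτk | hτk <;>
    simp only [map_qBracket, hσk, hτk, hσj, hτi]
  exact qBracket_right_comm_of_commute _ _ (commute_y_of_eq_zero hij m)

end Cartan

/-- the braid group `B(A)` acts on `K_t(A)` by `F`-algebra automorphisms,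
sending the generator `σ_i` to `T_i`. -/
theorem statement5 {I : Type} [Fintype I] [DecidableEq I] (a : I → I → ℤ)
    (hA : IsCartanADE a) (T : I → (Kt a ≃ₐ[F] Kt a))
    (hT : ∀ i, TiFormula a i ⇑(T i)) :
    ∃ Φ : PresentedGroup (braidRels a) →* (Kt a ≃ₐ[F] Kt a),
      ∀ i : I, Φ (PresentedGroup.of i) = T i := by
  have hrel : ∀ r ∈ braidRels a, FreeGroup.lift T r = 1 := by
    rintro r (⟨i, j, hij, rfl⟩ | ⟨i, j, hne, hij, rfl⟩) <;>
      simp only [map_mul, map_inv, FreeGroup.lift_apply_of, mul_inv_eq_one] <;>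
      refine Kt.algEquiv_ext fun k m => ?_
    · exact hA.braid_apply_y hij (hT i) (hT j) k m
    · exact hA.commute_apply_y hne hij (hT i) (hT j) k m
  exact ⟨PresentedGroup.toGroup hrel, fun i => PresentedGroup.toGroup.of hrel⟩
end
end

section
/- Let i, j ∈ I with a(i,j) = −1 and m ∈ ℤ. Then in K_t(A) the elements z(i; j,m) and z(i; j,m+1) satisfy the t-boson relation: z(i; j,m) z(i; j,m+1) = t^2 z(i; j,m+1) z(i; j,m) + (1 − t^2). -/
noncomputable section

variable {I : Type} [Fintype I] [DecidableEq I]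

section Statement13Aux

lemma tHalf_ne_zero' : tHalf ≠ 0 := RatFunc.X_ne_zero

lemma tq_eq_tHalf_sq' : tq = tHalf ^ 2 := rfl

lemma tq_sq_ne_one' : tq ^ 2 ≠ 1 := by
  intro h
  have hX : (RatFunc.X : F) = algebraMap (Polynomial ℂ) F Polynomial.X :=
    (RatFunc.algebraMap_X).symm
  have h2 : (RatFunc.X : F) ^ 4 = tq ^ 2 := by unfold tq; ring
  have h3 : algebraMap (Polynomial ℂ) F (Polynomial.X ^ 4) = algebraMap (Polynomial ℂ) F 1 := by
    simp only [map_pow, map_one, ← hX]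
    rw [h2, h]
  have h4 : (Polynomial.X : Polynomial ℂ) ^ 4 = 1 := IsFractionRing.injective (Polynomial ℂ) F h3
  have h5 := congrArg Polynomial.natDegree h4
  simp [Polynomial.natDegree_X_pow] at h5

set_option maxHeartbeats 1000000 in
set_option linter.unnecessarySeqFocus false in
lemma key {K R : Type} [Field K] [Ring R] [Algebra K R] (t s : K)
    (hs : s ≠ 0) (ht : t = s ^ 2) (h1 : t ^ 2 ≠ 1) (A B A' B' : R)
    (hAA : A * A' = t ^ 2 • (A' * A) + ((1:K) - t ^ 2) • (1:R))
    (hBB : B * B' = t ^ 2 • (B' * B) + ((1:K) - t ^ 2) • (1:R))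
    (hAB : A * B' = t⁻¹ • (B' * A))
    (hBA : B * A' = t⁻¹ • (A' * B)) :
    ((t - t⁻¹)⁻¹ • (s • (B * A) - s⁻¹ • (A * B))) *
      ((t - t⁻¹)⁻¹ • (s • (B' * A') - s⁻¹ • (A' * B')))
    = t ^ 2 • (((t - t⁻¹)⁻¹ • (s • (B' * A') - s⁻¹ • (A' * B'))) *
        ((t - t⁻¹)⁻¹ • (s • (B * A) - s⁻¹ • (A * B))))
      + ((1:K) - t ^ 2) • (1:R) := by
  subst ht
  have h14 : s ^ 4 - 1 ≠ 0 := by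
    intro h; apply h1; rw [← sub_eq_zero]; rw [← h]; ring
  have hkk : ((s ^ 2 - (s ^ 2)⁻¹)⁻¹) * ((s ^ 2 - (s ^ 2)⁻¹)⁻¹)
      = ((s ^ 4 - 1) ^ 2)⁻¹ * s ^ 4 := by
    have e : s ^ 2 - (s ^ 2)⁻¹ = (s ^ 4 - 1) / s ^ 2 := by field_simp
    rw [e, inv_div]
    field_simp
  have hAA' : ∀ X : R, A * (A' * X) = (s^2) ^ 2 • (A' * (A * X)) + ((1:K) - (s^2) ^ 2) • X := by
    intro X; rw [← mul_assoc, hAA, add_mul, smul_mul_assoc, smul_mul_assoc, mul_assoc, one_mul]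
  have hBB' : ∀ X : R, B * (B' * X) = (s^2) ^ 2 • (B' * (B * X)) + ((1:K) - (s^2) ^ 2) • X := by
    intro X; rw [← mul_assoc, hBB, add_mul, smul_mul_assoc, smul_mul_assoc, mul_assoc, one_mul]
  have hAB' : ∀ X : R, A * (B' * X) = (s^2)⁻¹ • (B' * (A * X)) := by
    intro X; rw [← mul_assoc, hAB, smul_mul_assoc, mul_assoc]
  have hBA' : ∀ X : R, B * (A' * X) = (s^2)⁻¹ • (A' * (B * X)) := by
    intro X; rw [← mul_assoc, hBA, smul_mul_assoc, mul_assoc]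
  have main : (s ^ 4 : K) • ((s • (B * A) - s⁻¹ • (A * B)) * (s • (B' * A') - s⁻¹ • (A' * B')))
      = (s ^ 4 * (s ^ 2) ^ 2) •
          ((s • (B' * A') - s⁻¹ • (A' * B')) * (s • (B * A) - s⁻¹ • (A * B)))
        + ((s ^ 4 - 1) ^ 2 * ((1:K) - (s ^ 2) ^ 2)) • (1 : R) := by
    simp only [smul_mul_assoc, mul_smul_comm, sub_mul, mul_sub, smul_sub, smul_add, smul_smul,
      mul_assoc, hAA', hBB', hAB', hBA', hAA, hBB, hAB, hBA, mul_add, add_mul, mul_one, one_mul]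
    match_scalars <;> field_simp [hs] <;> ring
  rw [smul_mul_smul_comm, smul_mul_smul_comm, hkk, mul_smul, main]
  match_scalars <;> field_simp [hs] <;> ring

lemma boson_rel {I : Type} [Fintype I] [DecidableEq I] (a : I → I → ℤ) (p q : I) (m : ℤ) :
    y a p m * y a q (m + 1) = (tq ^ (a p q)) • (y a q (m + 1) * y a p m)
      + (if p = q then ((1 : F) - tq ^ 2) • (1 : Kt a) else 0) := by
  have h := RingQuot.mkAlgHom_rel F (KtRel.boson (a := a) p q m)
  simpa [y, map_mul, map_add, map_smul, map_one, map_zero,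
    apply_ite (RingQuot.mkAlgHom F (KtRel a))] using h

end Statement13Aux

/-- for `a i j = -1`, the `t`-boson relation
`z(i;j,m) z(i;j,m+1) = t² z(i;j,m+1) z(i;j,m) + (1 − t²)` holds. -/
theorem statement13 {I : Type} [Fintype I] [DecidableEq I] (a : I → I → ℤ)
    (hA : IsCartanADE a) (i j : I) (hij : a i j = -1) (m : ℤ) :
    z a i j m * z a i j (m + 1)
      = (tq ^ 2) • (z a i j (m + 1) * z a i j m)
        + ((1 : F) - tq ^ 2) • (1 : Kt a) := by
  have hne : i ≠ j := by
    intro h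
    rw [h, hA.1 j] at hij
    norm_num at hij
  have hji : a j i = -1 := by rw [← hA.2.1 i j]; exact hij
  have h2 : (tq : F) ^ ((2 : ℤ)) = tq ^ 2 := by
    rw [show ((2 : ℤ)) = ((2 : ℕ) : ℤ) from rfl, zpow_natCast]
  have hAA : y a i m * y a i (m + 1)
      = tq ^ 2 • (y a i (m + 1) * y a i m) + ((1 : F) - tq ^ 2) • (1 : Kt a) := by
    have h := boson_rel a i i m
    rw [hA.1 i, h2, if_pos rfl] at h
    exact h
  have hBB : y a j m * y a j (m + 1)
      = tq ^ 2 • (y a j (m + 1) * y a j m) + ((1 : F) - tq ^ 2) • (1 : Kt a) := by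
    have h := boson_rel a j j m
    rw [hA.1 j, h2, if_pos rfl] at h
    exact h
  have hAB : y a i m * y a j (m + 1) = tq⁻¹ • (y a j (m + 1) * y a i m) := by
    have h := boson_rel a i j m
    rw [hij, if_neg hne, add_zero, zpow_neg_one] at h
    exact h
  have hBA : y a j m * y a i (m + 1) = tq⁻¹ • (y a i (m + 1) * y a j m) := by
    have h := boson_rel a j i m
    rw [hji, if_neg (Ne.symm hne), add_zero, zpow_neg_one] at h
    exact h
  exact key tq tHalf tHalf_ne_zero' tq_eq_tHalf_sq' tq_sq_ne_one'
    (y a i m) (y a j m) (y a i (m + 1)) (y a j (m + 1)) hAA hBB hAB hBA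
end
end
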